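/- For f, g ∈ F₃ with central leaves l(f) = 1ⁿ and l(g) = 1ᵐ, the central leaf of f ⋄ g is l(f ⋄ g) = 1^{n+m}. -/

import Mathlib

/-!
On `I_{1ⁿ}`, where `f` is linear onto some `I_{β_f}`, the map `f ⋄ g` is `g` rescaled into
`I_{β_f}`, so it is triadic linear on `I_{1ⁿ⁺ᵐ}`. Conversely, a linear piece of `f ⋄ g` on
`I_{1ⁿ⁺ᵐ⁻¹}` has its image inside `I_{β_f}`; as triadic intervals are nested only when their
addresses are prefixes of each other, it descends to a linear piece of `g` on `I_{1ᵐ⁻¹}`,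
contradicting the minimality of `m`. If `m = 0`, `g` is the identity and `f ⋄ g = f`.

The central leaf exists because `1/2` is not triadic, hence not a breakpoint: near `1/2` an
element of `F₃` is affine with triadic data, and maps all small `I_{1ⁿ}` onto triadic intervals.
-/

open Set
open scoped Classical

noncomputable section

/-- An address: a finite word in the alphabet `{0,1,2}`. -/
abbrev Address : Type := List (Fin 3)

/-- Left endpoint of the triadic interval `I_α`. -/
def addrLeft : Address → ℝ
  | [] => 0
  | i :: α => ((i : ℕ) : ℝ) / 3 + addrLeft α / 3

/-- Length of the triadic interval `I_α`. -/
def addrLen (α : Address) : ℝ := (1 / 3 : ℝ) ^ α.length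

/-- The triadic subinterval `I_α ⊆ [0,1]` determined by the address `α`. -/
def Iaddr (α : Address) : Set ℝ := Set.Icc (addrLeft α) (addrLeft α + addrLen α)

/-- The linear orientation-preserving isomorphism `ψ_α : I_α → [0,1]`. -/
def psi (α : Address) (t : ℝ) : ℝ := (t - addrLeft α) / addrLen α

/-- The inverse `ψ_α⁻¹ : [0,1] → I_α`. -/
def psiInv (α : Address) (t : ℝ) : ℝ := addrLeft α + addrLen α * t

/-- `φ_α(f)` acts as `ψ_α⁻¹ ∘ f ∘ ψ_α` on `I_α` and as the identity elsewhere. -/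
def phi (α : Address) (f : ℝ → ℝ) : ℝ → ℝ :=
  fun t => if t ∈ Iaddr α then psiInv α (f (psi α t)) else t

/-- A triadic rational. -/
def IsTriadic (q : ℝ) : Prop := ∃ a : ℤ, ∃ n : ℕ, q = (a : ℝ) / 3 ^ n

/-- Membership in the Brown–Thompson group `F₃`, realized as piecewise-linear
homeomorphisms of `[0,1]` (extended by the identity to all of `ℝ`) with breakpoints
at triadic rationals and slopes powers of `3`. The group product is `f·g = g ∘ f`. -/
def IsF3 (f : ℝ → ℝ) : Prop :=
  (∀ t, t ∉ Set.Icc (0 : ℝ) 1 → f t = t) ∧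
  Set.BijOn f (Set.Icc 0 1) (Set.Icc 0 1) ∧
  StrictMonoOn f (Set.Icc 0 1) ∧
  ∃ breaks : Finset ℝ, (∀ b ∈ breaks, IsTriadic b) ∧
    ∀ x ∈ Set.Icc (0 : ℝ) 1, x ∉ breaks →
      ∃ (k : ℤ) (c : ℝ), IsTriadic c ∧
        ∀ᶠ y in nhdsWithin x (Set.Icc 0 1), f y = (3 : ℝ) ^ k * y + c

/-- `f` maps `I_α` linearly (preserving orientation, with triadic affine data)
onto the triadic interval `I_β`. -/
def IsTriadicLinearOn (f : ℝ → ℝ) (α β : Address) : Prop :=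
  ∀ t ∈ Iaddr α, f t = psiInv β (psi α t)

/-- The depth of the maximal all-`i` leaf of the reduced domain tree of `f`:
the least `n` such that `f` maps `I_{iⁿ}` linearly onto a triadic interval. -/
def leafExp (i : Fin 3) (f : ℝ → ℝ) : ℕ :=
  sInf {n : ℕ | ∃ β : Address, IsTriadicLinearOn f (List.replicate n i) β}

/-- The address `l(f) = 1ⁿ` of the central leaf of `f` (the leaf of the reduced
domain tree whose interval contains `1/2`). -/
def centralLeaf (f : ℝ → ℝ) : Address := List.replicate (leafExp 1 f) 1

/-- The central monoid operation `f ⋄ g = φ_{l(f)}(g) · f` (recall `a·b = b ∘ a`). -/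
def diam (f g : ℝ → ℝ) : ℝ → ℝ := fun t => f (phi (centralLeaf f) g t)

theorem addrLen_pos (α : Address) : 0 < addrLen α := by
  unfold addrLen; positivity

theorem addrLen_eq_inv_pow (α : Address) : addrLen α = ((3 : ℝ) ^ α.length)⁻¹ := by
  rw [addrLen, one_div, inv_pow]

theorem addrLeft_nonneg (α : Address) : 0 ≤ addrLeft α := by
  induction α with
  | nil => rfl
  | cons i α ih => simp only [addrLeft]; positivity

theorem addrLeft_add_addrLen_le_one (α : Address) : addrLeft α + addrLen α ≤ 1 := by
  induction α with
  | nil => simp [addrLeft, addrLen]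
  | cons i α ih =>
    have hi : ((i : ℕ) : ℝ) ≤ 2 := by exact_mod_cast Nat.le_of_lt_succ i.2
    simp only [addrLeft, addrLen, List.length_cons, pow_succ] at *
    linarith

theorem Iaddr_subset_Icc (α : Address) : Iaddr α ⊆ Icc 0 1 := fun _ ht =>
  ⟨(addrLeft_nonneg α).trans ht.1, ht.2.trans (addrLeft_add_addrLen_le_one α)⟩

theorem Iaddr_nil : Iaddr [] = Icc 0 1 := by simp [Iaddr, addrLeft, addrLen]

theorem addrLeft_append (α γ : Address) :
    addrLeft (α ++ γ) = addrLeft α + addrLen α * addrLeft γ := by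
  induction α with
  | nil => simp [addrLeft, addrLen]
  | cons i α ih =>
    simp only [List.cons_append, addrLeft, addrLen, List.length_cons, pow_succ, ih] at *
    ring

theorem addrLen_append (α γ : Address) : addrLen (α ++ γ) = addrLen α * addrLen γ := by
  simp [addrLen, pow_add]

theorem addrLeft_replicate_one (n : ℕ) :
    addrLeft (List.replicate n 1) = (1 - (1 / 3 : ℝ) ^ n) / 2 := by
  induction n with
  | zero => simp [addrLeft]
  | succ n ih =>
    rw [List.replicate_succ, addrLeft, ih, pow_succ, show ((1 : Fin 3) : ℕ) = 1 from rfl]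
    push_cast
    ring

theorem psi_psiInv (α : Address) (x : ℝ) : psi α (psiInv α x) = x := by
  simp [psi, psiInv, (addrLen_pos α).ne']

theorem psiInv_psi (α : Address) (t : ℝ) : psiInv α (psi α t) = t := by
  simp [psi, psiInv, mul_div_cancel₀ _ (addrLen_pos α).ne']

theorem psi_nil (t : ℝ) : psi [] t = t := by simp [psi, addrLeft, addrLen]

theorem psiInv_nil (x : ℝ) : psiInv [] x = x := by simp [psiInv, addrLeft, addrLen]

theorem psi_append (α γ : Address) (t : ℝ) : psi (α ++ γ) t = psi γ (psi α t) := by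
  have := (addrLen_pos α).ne'
  simp only [psi, addrLeft_append, addrLen_append]
  field_simp
  ring

theorem psiInv_append (α γ : Address) (x : ℝ) :
    psiInv (α ++ γ) x = psiInv α (psiInv γ x) := by
  simp only [psiInv, addrLeft_append, addrLen_append]
  ring

theorem mem_Iaddr_iff_psi_mem {α : Address} {t : ℝ} : t ∈ Iaddr α ↔ psi α t ∈ Icc 0 1 := by
  have := addrLen_pos α
  simp only [Iaddr, psi, mem_Icc, le_div_iff₀ this, div_le_iff₀ this]
  constructor <;> rintro ⟨h₁, h₂⟩ <;> constructor <;> linarith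

theorem psiInv_mem_Iaddr (α : Address) {x : ℝ} (hx : x ∈ Icc 0 1) : psiInv α x ∈ Iaddr α := by
  rwa [mem_Iaddr_iff_psi_mem, psi_psiInv]

theorem mem_Iaddr_append {α γ : Address} {t : ℝ} :
    t ∈ Iaddr (α ++ γ) ↔ psi α t ∈ Iaddr γ := by
  rw [mem_Iaddr_iff_psi_mem, psi_append, ← mem_Iaddr_iff_psi_mem]

theorem Iaddr_append_subset (α γ : Address) : Iaddr (α ++ γ) ⊆ Iaddr α := fun _ ht =>
  mem_Iaddr_iff_psi_mem.2 (Iaddr_subset_Icc γ (mem_Iaddr_append.1 ht))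

theorem prefix_of_Iaddr_subset {α β : Address} (h : Iaddr β ⊆ Iaddr α) : α <+: β := by
  induction α generalizing β with
  | nil => exact List.nil_prefix
  | cons i α ih =>
    cases β with
    | nil =>
      rw [Iaddr_nil] at h
      have h₀ := (h ⟨le_rfl, zero_le_one⟩).1
      have h₁ := (h ⟨zero_le_one, le_rfl⟩).2
      have : addrLen (i :: α) < 1 := pow_lt_one₀ (by norm_num) (by norm_num) (by simp)
      linarith
    | cons j β =>
      -- `psi [i] ∘ psiInv [j]` is the translation by `j - i`
      have hshift : ∀ x ∈ Iaddr β, ((j : ℕ) - (i : ℕ) : ℝ) + x ∈ Iaddr α := by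
        intro x hx
        have hmem : psiInv [j] x ∈ Iaddr ([i] ++ α) :=
          h (mem_Iaddr_append (α := [j]) (γ := β) |>.2 (by rwa [psi_psiInv]))
        convert mem_Iaddr_append.1 hmem using 1
        simp only [psi, psiInv, addrLeft, addrLen, List.length_singleton, pow_one, zero_div,
          add_zero]
        ring
      have hmid : addrLeft β + addrLen β / 2 ∈ Iaddr β := by
        have := addrLen_pos β
        constructor <;> linarith
      have hmid_pos : 0 < addrLeft β + addrLen β / 2 := by
        linarith [addrLeft_nonneg β, addrLen_pos β]
      have hmid_lt : addrLeft β + addrLen β / 2 < 1 := by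
        linarith [addrLeft_add_addrLen_le_one β, addrLen_pos β]
      have hj := Iaddr_subset_Icc α (hshift _ hmid)
      have hij : i = j := by
        have h₁ : ((j : ℕ) : ℝ) < (i : ℕ) + 1 := by linarith [hj.2]
        have h₂ : ((i : ℕ) : ℝ) < (j : ℕ) + 1 := by linarith [hj.1]
        norm_cast at h₁ h₂
        exact Fin.ext (by omega)
      subst hij
      refine (List.prefix_cons_inj i).2 (ih (β := β) fun x hx => ?_)
      simpa using hshift x hx

section TriadicLinear

variable {F H : ℝ → ℝ} {α α' β γ δ : Address}

theorem isTriadicLinearOn_id (γ : Address) : IsTriadicLinearOn id γ γ := fun t _ =>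
  (psiInv_psi γ t).symm

theorem IsTriadicLinearOn.conj (hHF : ∀ t ∈ Iaddr α, H t = psiInv α' (F (psi α t)))
    (hF : IsTriadicLinearOn F γ δ) : IsTriadicLinearOn H (α ++ γ) (α' ++ δ) := by
  intro t ht
  rw [hHF t (Iaddr_append_subset α γ ht), hF _ (mem_Iaddr_append.1 ht), psiInv_append,
    psi_append]

theorem IsTriadicLinearOn.append (h : IsTriadicLinearOn F α β) (γ : Address) :
    IsTriadicLinearOn F (α ++ γ) (β ++ γ) :=
  IsTriadicLinearOn.conj (F := id) h (isTriadicLinearOn_id γ)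

theorem IsTriadicLinearOn.of_conj (hHF : ∀ t ∈ Iaddr α, H t = psiInv α' (F (psi α t)))
    (hF : MapsTo F (Iaddr γ) (Icc 0 1)) (hH : IsTriadicLinearOn H (α ++ γ) β) :
    ∃ δ, IsTriadicLinearOn F γ δ := by
  have hconj : ∀ s ∈ Iaddr γ, psiInv α' (F s) = psiInv β (psi γ s) := by
    intro s hs
    have ht : psiInv α s ∈ Iaddr (α ++ γ) := mem_Iaddr_append.2 (by rwa [psi_psiInv])
    rw [← psi_psiInv α s, ← hHF _ (Iaddr_append_subset α γ ht), hH _ ht, psi_append]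
  have hsub : Iaddr β ⊆ Iaddr α' := by
    intro y hy
    have hs : psiInv γ (psi β y) ∈ Iaddr γ := psiInv_mem_Iaddr γ (mem_Iaddr_iff_psi_mem.1 hy)
    have := psiInv_mem_Iaddr α' (hF hs)
    rwa [hconj _ hs, psi_psiInv, psiInv_psi] at this
  obtain ⟨δ, rfl⟩ := prefix_of_Iaddr_subset hsub
  refine ⟨δ, fun s hs => ?_⟩
  rw [← psi_psiInv α' (F s), hconj s hs, psiInv_append, psi_psiInv]

end TriadicLinear

theorem half_not_isTriadic : ¬ IsTriadic (1 / 2 : ℝ) := by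
  rintro ⟨a, N, hN⟩
  have h2a : 2 * a = 3 ^ N := by
    have : (3 : ℝ) ^ N ≠ 0 := by positivity
    field_simp at hN
    exact_mod_cast hN.symm
  have : (2 : ℤ) ∣ 3 ^ N := ⟨a, h2a.symm⟩
  have := Int.Prime.dvd_pow' (p := 2) (by norm_num) this
  norm_num at this

theorem IsF3.exists_affine_near_half {f : ℝ → ℝ} (hf : IsF3 f) :
    ∃ (k : ℤ) (p : ℤ) (N : ℕ), ∀ᶠ y in nhds (1 / 2 : ℝ), f y = 3 ^ k * y + p / 3 ^ N := by
  obtain ⟨-, -, -, breaks, hbreaks, hpieces⟩ := hf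
  obtain ⟨k, c, ⟨p, N, rfl⟩, hev⟩ := hpieces (1 / 2) (by norm_num)
    fun h => half_not_isTriadic (hbreaks _ h)
  rw [nhdsWithin_eq_nhds.2 (Icc_mem_nhds (by norm_num) (by norm_num))] at hev
  exact ⟨k, p, N, hev⟩

theorem eventually_Iaddr_replicate_one_subset {U : Set ℝ} (hU : U ∈ nhds (1 / 2 : ℝ)) :
    ∀ᶠ n in Filter.atTop, Iaddr (List.replicate n 1) ⊆ U := by
  obtain ⟨ε, hε, hball⟩ := Metric.mem_nhds_iff.1 hU
  filter_upwards [(tendsto_pow_atTop_nhds_zero_of_lt_one (r := (1 / 3 : ℝ)) (by norm_num)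
    (by norm_num)).eventually (gt_mem_nhds hε)] with n hn t ht
  apply hball
  rw [Iaddr, addrLeft_replicate_one, addrLen, List.length_replicate] at ht
  rw [Metric.mem_ball, Real.dist_eq, abs_lt]
  constructor <;> linarith [ht.1, ht.2, pow_pos (by norm_num : (0 : ℝ) < 1 / 3) n]

theorem addrLeft_eq_int_div (α : Address) :
    ∃ b : ℤ, addrLeft α = b / 3 ^ α.length := by
  induction α with
  | nil => exact ⟨0, by simp [addrLeft]⟩
  | cons i α ih =>
    obtain ⟨b, hb⟩ := ih
    refine ⟨(i : ℕ) * 3 ^ α.length + b, ?_⟩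
    simp only [addrLeft, hb, List.length_cons, pow_succ]
    push_cast
    field_simp

theorem exists_address_addrLeft_eq (ℓ : ℕ) (a : ℤ) (ha₀ : 0 ≤ a) (ha : a < 3 ^ ℓ) :
    ∃ β : Address, β.length = ℓ ∧ addrLeft β = a / 3 ^ ℓ := by
  induction ℓ generalizing a with
  | zero => exact ⟨[], rfl, by simp [addrLeft, show a = 0 by omega]⟩
  | succ ℓ ih =>
    have h3 : (0 : ℤ) < 3 ^ ℓ := by positivity
    obtain ⟨β, hlen, hleft⟩ :=
      ih (a % 3 ^ ℓ) (Int.emod_nonneg a h3.ne') (Int.emod_lt_of_pos a h3)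
    have hq₀ : 0 ≤ a / 3 ^ ℓ := Int.ediv_nonneg ha₀ h3.le
    have hq : a / 3 ^ ℓ < 3 := by
      rw [Int.ediv_lt_iff_lt_mul h3]; rw [pow_succ] at ha; linarith
    refine ⟨⟨(a / 3 ^ ℓ).toNat, by omega⟩ :: β, by simp [hlen], ?_⟩
    have hdigit : (((a / 3 ^ ℓ).toNat : ℕ) : ℝ) = ((a / 3 ^ ℓ : ℤ) : ℝ) := by
      exact_mod_cast Int.toNat_of_nonneg hq₀
    have hdiv : (a : ℝ) = 3 ^ ℓ * ((a / 3 ^ ℓ : ℤ) : ℝ) + ((a % 3 ^ ℓ : ℤ) : ℝ) := by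
      exact_mod_cast (Int.mul_ediv_add_emod a _).symm
    simp only [addrLeft, hleft, hdigit]
    rw [hdiv, pow_succ]
    field_simp

theorem exists_isTriadicLinearOn_of_affine {F : ℝ → ℝ} {α : Address} {k p : ℤ} {N ℓ : ℕ}
    (hkℓ : k + ℓ = α.length) (hNℓ : N ≤ ℓ) (hF : ∀ t ∈ Iaddr α, F t = 3 ^ k * t + p / 3 ^ N)
    (hmaps : MapsTo F (Iaddr α) (Icc 0 1)) : ∃ β, IsTriadicLinearOn F α β := by
  obtain ⟨b, hb⟩ := addrLeft_eq_int_div α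
  have hL : addrLeft α ∈ Iaddr α := ⟨le_rfl, by linarith [addrLen_pos α]⟩
  have hR : addrLeft α + addrLen α ∈ Iaddr α := ⟨by linarith [addrLen_pos α], le_rfl⟩
  have hslope : (3 : ℝ) ^ k = 3 ^ α.length / 3 ^ ℓ := by
    rw [eq_div_iff (by positivity), ← zpow_natCast, ← zpow_natCast, ← zpow_add₀ (by norm_num),
      hkℓ]
  set a : ℤ := b + p * 3 ^ (ℓ - N)
  have hleft : F (addrLeft α) = a / 3 ^ ℓ := by
    have : (3 : ℝ) ^ ℓ = 3 ^ (ℓ - N) * 3 ^ N := by rw [← pow_add, Nat.sub_add_cancel hNℓ]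
    rw [hF _ hL, hslope, hb, this]
    simp only [a]
    push_cast
    field_simp
  have hright : F (addrLeft α + addrLen α) = (a + 1) / 3 ^ ℓ := by
    rw [hF _ hR, mul_add, add_right_comm, ← hF _ hL, hleft, hslope, addrLen_eq_inv_pow]
    field_simp
  have h3 : (0 : ℝ) < 3 ^ ℓ := by positivity
  have ha₀ : 0 ≤ a := by
    have := (hmaps hL).1
    rw [hleft, le_div_iff₀ h3, zero_mul] at this
    exact_mod_cast this
  have ha : a < 3 ^ ℓ := by
    have := (hmaps hR).2
    rw [hright, div_le_one h3] at this
    exact_mod_cast (by linarith : (a : ℝ) < 3 ^ ℓ)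
  obtain ⟨β, hβlen, hβleft⟩ := exists_address_addrLeft_eq ℓ a ha₀ ha
  refine ⟨β, fun t ht => ?_⟩
  rw [psiInv, psi, hβleft, ← hleft, hF t ht, hF _ hL, addrLen_eq_inv_pow, addrLen_eq_inv_pow,
    hβlen, hslope]
  field_simp
  ring

theorem IsF3.exists_isTriadicLinearOn_replicate_one {f : ℝ → ℝ} (hf : IsF3 f) :
    ∃ n β, IsTriadicLinearOn f (List.replicate n 1) β := by
  obtain ⟨k, p, N, hev⟩ := hf.exists_affine_near_half
  obtain ⟨n, hsub, hn⟩ := ((eventually_Iaddr_replicate_one_subset hev).and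
    (Filter.eventually_ge_atTop (N + k.natAbs))).exists
  have hmaps : MapsTo f (Iaddr (List.replicate n 1)) (Icc 0 1) :=
    hf.2.1.mapsTo.mono_left (Iaddr_subset_Icc _)
  obtain ⟨β, hβ⟩ := exists_isTriadicLinearOn_of_affine (ℓ := (n - k).toNat)
    (by rw [List.length_replicate]; omega) (by omega) (fun t ht => hsub ht) hmaps
  exact ⟨n, β, hβ⟩

section LeafExp

variable {f g : ℝ → ℝ} {i : Fin 3} {n : ℕ} {β : Address}

theorem leafExp_le (h : IsTriadicLinearOn f (List.replicate n i) β) : leafExp i f ≤ n :=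
  Nat.sInf_le ⟨β, h⟩

theorem exists_isTriadicLinearOn_leafExp (h : IsTriadicLinearOn f (List.replicate n i) β) :
    ∃ β₀, IsTriadicLinearOn f (List.replicate (leafExp i f) i) β₀ :=
  Nat.sInf_mem (s := {m | ∃ β, IsTriadicLinearOn f (List.replicate m i) β}) ⟨n, β, h⟩

theorem IsF3.exists_isTriadicLinearOn_centralLeaf (hf : IsF3 f) :
    ∃ β, IsTriadicLinearOn f (centralLeaf f) β := by
  obtain ⟨n, β, h⟩ := hf.exists_isTriadicLinearOn_replicate_one
  exact exists_isTriadicLinearOn_leafExp h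

theorem leafExp_eq_succ (h : IsTriadicLinearOn f (List.replicate (n + 1) i) β)
    (hn : ∀ β, ¬ IsTriadicLinearOn f (List.replicate n i) β) : leafExp i f = n + 1 := by
  refine le_antisymm (leafExp_le h) (Nat.succ_le_of_lt ?_)
  by_contra! hle
  obtain ⟨β₀, h₀⟩ := exists_isTriadicLinearOn_leafExp h
  have hsplit : List.replicate n i =
      List.replicate (leafExp i f) i ++ List.replicate (n - leafExp i f) i := by
    rw [← List.replicate_add, Nat.add_sub_cancel' hle]
  apply hn (β₀ ++ List.replicate (n - leafExp i f) i)
  rw [hsplit]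
  exact h₀.append _

theorem leafExp_eq_of_centralLeaf_eq (h : centralLeaf f = List.replicate n 1) :
    leafExp 1 f = n := by
  simpa [centralLeaf] using congrArg List.length h

theorem diam_eq_on_centralLeaf (hf : IsTriadicLinearOn f (centralLeaf f) β)
    (hg : MapsTo g (Icc 0 1) (Icc 0 1)) :
    ∀ t ∈ Iaddr (centralLeaf f), diam f g t = psiInv β (g (psi (centralLeaf f) t)) := by
  intro t ht
  have hgt := hg (mem_Iaddr_iff_psi_mem.1 ht)
  rw [diam, phi, if_pos ht, hf _ (psiInv_mem_Iaddr _ hgt), psi_psiInv]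

theorem diam_eq_self_of_eqOn_id (hg : EqOn g id (Icc 0 1)) : diam f g = f := by
  funext t
  rw [diam, phi]
  split_ifs with ht
  · rw [hg (mem_Iaddr_iff_psi_mem.1 ht), id, psiInv_psi]
  · rfl

theorem eqOn_id_of_isTriadicLinearOn_nil (hg : SurjOn g (Icc 0 1) (Icc 0 1))
    (h : IsTriadicLinearOn g [] β) : EqOn g id (Icc 0 1) := by
  have hβ : β = [] := by
    refine List.prefix_nil.1 (prefix_of_Iaddr_subset fun y hy => ?_)
    rw [Iaddr_nil] at hy
    obtain ⟨x, hx, rfl⟩ := hg hy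
    rw [h x (by rwa [Iaddr_nil])]
    exact psiInv_mem_Iaddr β (by rwa [psi_nil])
  intro x hx
  rw [h x (by rwa [Iaddr_nil]), hβ, psi_nil, psiInv_nil, id]

end LeafExp

/-- central leaves add under `⋄`: if `l(f) = 1ⁿ` and `l(g) = 1ᵐ`
then `l(f ⋄ g) = 1^(n+m)`. -/
theorem centralLeaf_diam (f g : ℝ → ℝ) (hf : IsF3 f) (hg : IsF3 g) (n m : ℕ)
    (hn : centralLeaf f = List.replicate n (1 : Fin 3))
    (hm : centralLeaf g = List.replicate m (1 : Fin 3)) :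
    centralLeaf (diam f g) = List.replicate (n + m) (1 : Fin 3) := by
  suffices leafExp 1 (diam f g) = n + m by rw [centralLeaf, this]
  obtain ⟨βf, hβf⟩ := hf.exists_isTriadicLinearOn_centralLeaf
  obtain ⟨βg, hβg⟩ := hg.exists_isTriadicLinearOn_centralLeaf
  have hdiam := diam_eq_on_centralLeaf hβf hg.2.1.mapsTo
  rw [hn] at hβf hdiam
  rw [hm] at hβg
  cases m with
  | zero =>
    rw [diam_eq_self_of_eqOn_id (eqOn_id_of_isTriadicLinearOn_nil hg.2.1.surjOn hβg)]
    exact leafExp_eq_of_centralLeaf_eq hn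
  | succ m =>
    refine leafExp_eq_succ (n := n + m) (β := βf ++ βg) ?_ fun β hβ => ?_
    · rw [add_assoc, List.replicate_add]
      exact IsTriadicLinearOn.conj hdiam hβg
    · rw [List.replicate_add] at hβ
      obtain ⟨δ, hδ⟩ := hβ.of_conj hdiam (hg.2.1.mapsTo.mono_left (Iaddr_subset_Icc _))
      have := leafExp_le hδ
      rw [leafExp_eq_of_centralLeaf_eq hm] at this
      omega
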